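/- arXiv:2007.01990 — 2 statements merged into one kernel-verified Lean document; each statement's English description precedes it below -/
import Mathlib

section
/- Let U be L-smooth, (α,β)-dissipative, and let 0 < η < α/L². For the discrete Langevin iteration Z(k+1) = Z(k) − η∇U(Z(k)) + √(2ητ(k))·ξ(k) in ℝᵈ, where τ(k) ∈ {τ₁, τ₂} with 0 < τ₁ < τ₂ and ξ(k) is a standard Gaussian independent of Z(k), one has E[‖Z(k+1)‖²] ≤ (1 − 2αη + 2η²L²)·E[‖Z(k)‖²] + 2(β + dτ₂)η + 2η²L²‖x*‖², where x* is a stationary point of U. -/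
/-!
Write `Z(k+1) = A + c • ξ` with `A = Z - η • ∇U(Z)` and `c = √(2ητ)`. Expanding the square,
the cross term `E⟪c • A, ξ⟫` vanishes since `c • A` is a function of `(Z, τ)`, hence independent
of the centred `ξ`; the noise term is at most `2ητ₂ E‖ξ‖² = 2ητ₂ d`. The drift is bounded
pointwise: dissipativity controls `⟪z, ∇U z⟫`, and smoothness at the stationary point gives
`‖∇U z‖ ≤ L ‖z - x⋆‖`, whence `‖∇U z‖² ≤ 2L² (‖z‖² + ‖x⋆‖²)`.
-/

open scoped RealInnerProductSpace NNReal
open MeasureTheory ProbabilityTheory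

namespace ProbabilityTheory.HasLaw

variable {Ω : Type*} [MeasurableSpace Ω] {P : Measure Ω} {X : Ω → ℝ} {m : ℝ} {v : ℝ≥0}

lemma memLp_of_gaussianReal (hX : HasLaw X (gaussianReal m v) P) (p : ℝ≥0) : MemLp X p P :=
  (hX.map_eq ▸ memLp_id_gaussianReal p).comp_of_map hX.aemeasurable

lemma integral_eq_of_gaussianReal (hX : HasLaw X (gaussianReal m v) P) : P[X] = m := by
  rw [hX.integral_eq, integral_id_gaussianReal]

lemma integral_sq_of_gaussianReal (hX : HasLaw X (gaussianReal m v) P) :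
    ∫ ω, X ω ^ 2 ∂P = v + m ^ 2 := by
  have := hX.isProbabilityMeasure
  have h := variance_eq_sub (hX.memLp_of_gaussianReal 2)
  rw [hX.variance_eq, variance_id_gaussianReal, hX.integral_eq_of_gaussianReal] at h
  simp only [Pi.pow_apply] at h
  linarith

end ProbabilityTheory.HasLaw

section RandomVector

variable {Ω : Type*} [MeasurableSpace Ω] {P : Measure Ω} {ι : Type*} [Fintype ι]

lemma EuclideanSpace.inner_eq_sum_mul (x y : EuclideanSpace ℝ ι) : ⟪x, y⟫ = ∑ i, x i * y i := by
  simp [PiLp.inner_apply, mul_comm]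

lemma integrable_norm_sq_of_forall_memLp {ξ : Ω → EuclideanSpace ℝ ι}
    (hξ : ∀ i, MemLp (fun ω => ξ ω i) 2 P) : Integrable (fun ω => ‖ξ ω‖ ^ 2) P := by
  simp_rw [EuclideanSpace.norm_sq_eq, Real.norm_eq_abs, sq_abs]
  exact integrable_finsetSum _ fun i _ => (hξ i).integrable_sq

lemma integral_norm_sq_of_hasLaw_gaussianReal {ξ : Ω → EuclideanSpace ℝ ι}
    (hξ : ∀ i, HasLaw (fun ω => ξ ω i) (gaussianReal 0 1) P) :
    ∫ ω, ‖ξ ω‖ ^ 2 ∂P = Fintype.card ι := by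
  simp_rw [EuclideanSpace.norm_sq_eq, Real.norm_eq_abs, sq_abs]
  rw [integral_finsetSum _ fun i _ => ((hξ i).memLp_of_gaussianReal 2).integrable_sq]
  simp [(hξ _).integral_sq_of_gaussianReal]

lemma integral_mul_norm_sq_le_of_hasLaw_gaussianReal {ξ : Ω → EuclideanSpace ℝ ι} {s : Ω → ℝ}
    {S : ℝ} (hs : ∀ ω, 0 ≤ s ω) (hsS : ∀ ω, s ω ≤ S)
    (hξ : ∀ i, HasLaw (fun ω => ξ ω i) (gaussianReal 0 1) P) :
    ∫ ω, s ω * ‖ξ ω‖ ^ 2 ∂P ≤ S * Fintype.card ι := calc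
  _ ≤ ∫ ω, S * ‖ξ ω‖ ^ 2 ∂P :=
    integral_mono_of_nonneg (ae_of_all _ fun ω => by have := hs ω; positivity)
      ((integrable_norm_sq_of_forall_memLp fun i => (hξ i).memLp_of_gaussianReal 2).const_mul S)
      (ae_of_all _ fun ω => mul_le_mul_of_nonneg_right (hsS ω) (sq_nonneg _))
  _ = S * Fintype.card ι := by rw [integral_const_mul, integral_norm_sq_of_hasLaw_gaussianReal hξ]

variable {W ξ : Ω → EuclideanSpace ℝ ι}

omit [Fintype ι] in
lemma ProbabilityTheory.IndepFun.apply_apply (hind : IndepFun W ξ P) (i j : ι) :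
    IndepFun (fun ω => W ω i) (fun ω => ξ ω j) P :=
  hind.comp (φ := fun x : EuclideanSpace ℝ ι => x i) (ψ := fun x : EuclideanSpace ℝ ι => x j)
    (by fun_prop) (by fun_prop)

lemma MeasureTheory.Integrable.apply (hW : Integrable W P) (i : ι) :
    Integrable (fun ω => W ω i) P :=
  (EuclideanSpace.proj (𝕜 := ℝ) (ι := ι) i).integrable_comp hW

lemma integrable_inner_of_indepFun (hind : IndepFun W ξ P) (hW : Integrable W P)
    (hξ : ∀ i, Integrable (fun ω => ξ ω i) P) : Integrable (fun ω => ⟪W ω, ξ ω⟫) P := by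
  simp_rw [EuclideanSpace.inner_eq_sum_mul]
  exact integrable_finsetSum _ fun i _ => (hind.apply_apply i i).integrable_mul (hW.apply i) (hξ i)

lemma integral_inner_eq_zero_of_indepFun (hind : IndepFun W ξ P) (hW : Integrable W P)
    (hξ : ∀ i, Integrable (fun ω => ξ ω i) P) (hξ_mean : ∀ i, ∫ ω, ξ ω i ∂P = 0) :
    ∫ ω, ⟪W ω, ξ ω⟫ ∂P = 0 := by
  simp_rw [EuclideanSpace.inner_eq_sum_mul]
  rw [integral_finsetSum (f := fun i ω => W ω i * ξ ω i) _ fun i _ =>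
    (hind.apply_apply i i).integrable_mul (hW.apply i) (hξ i)]
  refine Finset.sum_eq_zero fun i _ => ?_
  have := (hind.apply_apply i i).integral_mul_eq_mul_integral (hW.apply i).aestronglyMeasurable
    (hξ i).aestronglyMeasurable
  simpa [hξ_mean i] using this

lemma integral_norm_add_smul_sq_of_indepFun [IsFiniteMeasure P] {A : Ω → EuclideanSpace ℝ ι}
    {c : Ω → ℝ} {C : ℝ} (hind : IndepFun (fun ω => (A ω, c ω)) ξ P) (hA : MemLp A 2 P)
    (hc : AEStronglyMeasurable c P) (hcC : ∀ ω, |c ω| ≤ C)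
    (hξ : ∀ i, MemLp (fun ω => ξ ω i) 2 P) (hξ_mean : ∀ i, ∫ ω, ξ ω i ∂P = 0) :
    ∫ ω, ‖A ω + c ω • ξ ω‖ ^ 2 ∂P = ∫ ω, ‖A ω‖ ^ 2 ∂P + ∫ ω, c ω ^ 2 * ‖ξ ω‖ ^ 2 ∂P := by
  have hcA : IndepFun (fun ω => c ω • A ω) ξ P :=
    hind.comp (φ := fun p : EuclideanSpace ℝ ι × ℝ => p.2 • p.1) (by fun_prop) measurable_id
  have hcA_int : Integrable (fun ω => c ω • A ω) P :=
    (hA.integrable one_le_two).bdd_smul C hc (ae_of_all _ hcC)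
  have hξ_int i := (hξ i).integrable one_le_two
  have hA_sq : Integrable (fun ω => ‖A ω‖ ^ 2) P := hA.integrable_norm_pow two_ne_zero
  have hcross := (integrable_inner_of_indepFun hcA hcA_int hξ_int).const_mul 2
  have hnoise : Integrable (fun ω => c ω ^ 2 * ‖ξ ω‖ ^ 2) P := by
    refine (integrable_norm_sq_of_forall_memLp hξ).bdd_mul (hc.pow 2) (c := C ^ 2)
      (ae_of_all _ fun ω => ?_)
    rw [Real.norm_eq_abs, abs_pow]
    exact pow_le_pow_left₀ (abs_nonneg _) (hcC ω) 2
  have hexpand ω : ‖A ω + c ω • ξ ω‖ ^ 2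
      = ‖A ω‖ ^ 2 + 2 * ⟪c ω • A ω, ξ ω⟫ + c ω ^ 2 * ‖ξ ω‖ ^ 2 := by
    rw [norm_add_sq_real, real_inner_smul_right, real_inner_smul_left, norm_smul, mul_pow,
      Real.norm_eq_abs, sq_abs]
  simp_rw [hexpand]
  have hdrift_cross : Integrable (fun ω => ‖A ω‖ ^ 2 + 2 * ⟪c ω • A ω, ξ ω⟫) P :=
    hA_sq.add hcross
  rw [integral_add hdrift_cross hnoise, integral_add hA_sq hcross, integral_const_mul,
    integral_inner_eq_zero_of_indepFun hcA hcA_int hξ_int hξ_mean, mul_zero, add_zero]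

end RandomVector

lemma integral_le_mul_integral_add_of_le {Ω : Type*} [MeasurableSpace Ω] {P : Measure Ω}
    [IsProbabilityMeasure P] {f g : Ω → ℝ} {a b : ℝ} (hf : Integrable f P) (hg : Integrable g P)
    (h : ∀ ω, f ω ≤ a * g ω + b) : ∫ ω, f ω ∂P ≤ a * ∫ ω, g ω ∂P + b := calc
  _ ≤ ∫ ω, (a * g ω + b) ∂P := integral_mono hf ((hg.const_mul a).add (integrable_const b)) h
  _ = a * ∫ ω, g ω ∂P + b := by
    rw [integral_add (hg.const_mul a) (integrable_const b), integral_const_mul]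
    simp

lemma memLp_two_of_norm_sq_le {Ω E : Type*} [MeasurableSpace Ω] [NormedAddCommGroup E]
    {P : Measure Ω} [IsFiniteMeasure P] {f : Ω → E} {g : Ω → ℝ} {a b : ℝ}
    (hf : AEStronglyMeasurable f P) (hg : Integrable g P) (h : ∀ ω, ‖f ω‖ ^ 2 ≤ a * g ω + b) :
    MemLp f 2 P :=
  (memLp_two_iff_integrable_sq_norm hf).2 <| integrable_of_le_of_le (g₁ := 0)
    (hf.norm.pow 2) (ae_of_all _ fun ω => by positivity) (ae_of_all _ h) (integrable_zero _ _ _)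
    ((hg.const_mul a).add (integrable_const b))

lemma norm_sub_smul_sq_le {E : Type*} [NormedAddCommGroup E] [InnerProductSpace ℝ E]
    {x v x₀ : E} {L α β η : ℝ} (hv : ‖v‖ ≤ L * ‖x - x₀‖) (hxv : α * ‖x‖ ^ 2 - β ≤ ⟪x, v⟫)
    (hη : 0 ≤ η) :
    ‖x - η • v‖ ^ 2 ≤ (1 - 2 * α * η + 2 * η ^ 2 * L ^ 2) * ‖x‖ ^ 2
      + (2 * β * η + 2 * η ^ 2 * L ^ 2 * ‖x₀‖ ^ 2) := by
  have hv_sq : ‖v‖ ^ 2 ≤ L ^ 2 * (2 * (‖x‖ ^ 2 + ‖x₀‖ ^ 2)) := calc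
    ‖v‖ ^ 2 ≤ (L * ‖x - x₀‖) ^ 2 := pow_le_pow_left₀ (norm_nonneg v) hv 2
    _ = L ^ 2 * ‖x - x₀‖ ^ 2 := mul_pow _ _ _
    _ ≤ L ^ 2 * (‖x‖ + ‖x₀‖) ^ 2 := by gcongr; exact norm_sub_le x x₀
    _ ≤ L ^ 2 * (2 * (‖x‖ ^ 2 + ‖x₀‖ ^ 2)) := by gcongr; exact add_sq_le
  rw [norm_sub_sq_real, real_inner_smul_right, norm_smul, mul_pow, Real.norm_eq_abs, sq_abs]
  linarith [mul_le_mul_of_nonneg_left hxv hη, mul_le_mul_of_nonneg_left hv_sq (sq_nonneg η)]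

theorem discrete_iterate_second_moment_bound_general (d : ℕ)
    {Ω : Type*} [MeasurableSpace Ω] (P : Measure Ω) [IsProbabilityMeasure P]
    (gradU : EuclideanSpace ℝ (Fin d) → EuclideanSpace ℝ (Fin d))
    (L α β τ₁ τ₂ : ℝ)
    (hτ₁ : 0 < τ₁) (hτ₁₂ : τ₁ < τ₂)
    (hsmooth : ∀ x y : EuclideanSpace ℝ (Fin d),
      ‖gradU x - gradU y‖ ≤ L * ‖x - y‖)
    (hdiss : ∀ x : EuclideanSpace ℝ (Fin d), α * ‖x‖ ^ 2 - β ≤ ⟪x, gradU x⟫)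
    (xstar : EuclideanSpace ℝ (Fin d)) (hstar : gradU xstar = 0)
    (η : ℝ) (hη0 : 0 < η)
    (Z Znext ξ : Ω → EuclideanSpace ℝ (Fin d)) (τk : Ω → ℝ)
    (hZmeas : Measurable Z)
    -- τ(k) takes values in {τ₁, τ₂} and is σ(Z(k))-measurable
    (hτval : ∀ ω, τk ω = τ₁ ∨ τk ω = τ₂)
    (hτZ : ∃ φ : EuclideanSpace ℝ (Fin d) → ℝ, Measurable φ ∧ τk = φ ∘ Z)
    -- the discrete Langevin update
    (hupdate : ∀ ω, Znext ω
      = Z ω - η • gradU (Z ω) + Real.sqrt (2 * η * τk ω) • ξ ω)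
    -- ξ(k) is a standard Gaussian: i.i.d. standard normal coordinates
    (hgauss : ∀ i : Fin d,
      Measure.map (fun ω => ξ ω i) P = gaussianReal 0 1)
    -- ξ(k) is independent of (Z(k), τ(k))
    (hindep : IndepFun ξ (fun ω => (Z ω, τk ω)) P)
    -- finite second moments
    (hZint : Integrable (fun ω => ‖Z ω‖ ^ 2) P) :
    (∫ ω, ‖Znext ω‖ ^ 2 ∂P)
      ≤ (1 - 2 * α * η + 2 * η ^ 2 * L ^ 2) * (∫ ω, ‖Z ω‖ ^ 2 ∂P)
        + 2 * (β + d * τ₂) * η + 2 * η ^ 2 * L ^ 2 * ‖xstar‖ ^ 2 := by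
  obtain ⟨φ, hφ, hτ⟩ := hτZ
  have hτ_meas : Measurable τk := hτ ▸ hφ.comp hZmeas
  have hτ_bounds ω : 0 ≤ τk ω ∧ τk ω ≤ τ₂ := by
    rcases hτval ω with h | h <;> constructor <;> linarith
  have hgrad : Continuous gradU :=
    (LipschitzWith.of_dist_le' fun x y => by simpa only [dist_eq_norm] using hsmooth x y).continuous
  set A : Ω → EuclideanSpace ℝ (Fin d) := fun ω => Z ω - η • gradU (Z ω)
  set c : Ω → ℝ := fun ω => √(2 * η * τk ω)
  have hA_meas : Measurable A := hZmeas.sub ((hgrad.measurable.comp hZmeas).const_smul η)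
  have hdrift ω := norm_sub_smul_sq_le (by simpa [hstar] using hsmooth (Z ω) xstar)
    (hdiss (Z ω)) hη0.le
  have hA : MemLp A 2 P := memLp_two_of_norm_sq_le hA_meas.aestronglyMeasurable hZint hdrift
  -- `Measure.map` of a map that is not AE-measurable is `0`, so `hgauss` forces AE-measurability.
  have hξ i : HasLaw (fun ω => ξ ω i) (gaussianReal 0 1) P :=
    ⟨.of_map_ne_zero (hgauss i ▸ IsProbabilityMeasure.ne_zero _), hgauss i⟩
  have hc_sq ω : c ω ^ 2 = 2 * η * τk ω := Real.sq_sqrt (by nlinarith [hτ_bounds ω])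
  have hsplit := integral_norm_add_smul_sq_of_indepFun (c := c) (C := √(2 * η * τ₂))
    (hindep.symm.comp (φ := fun p => (p.1 - η • gradU p.1, √(2 * η * p.2)))
      (by fun_prop) measurable_id)
    hA (by fun_prop)
    (fun ω => by rw [abs_of_nonneg (Real.sqrt_nonneg _)]; gcongr; exact (hτ_bounds ω).2)
    (fun i => (hξ i).memLp_of_gaussianReal 2) (fun i => (hξ i).integral_eq_of_gaussianReal)
  have hnoise := integral_mul_norm_sq_le_of_hasLaw_gaussianReal (S := 2 * η * τ₂)
    (fun ω => sq_nonneg (c ω)) (fun ω => by rw [hc_sq]; gcongr; exact (hτ_bounds ω).2) hξ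
  have hdrift_int := integral_le_mul_integral_add_of_le (hA.integrable_norm_pow two_ne_zero)
    hZint hdrift
  rw [show Znext = fun ω => A ω + c ω • ξ ω from funext hupdate, hsplit]
  simp only [Fintype.card_fin] at hnoise
  linarith

theorem discrete_iterate_second_moment_bound (d : ℕ)
    {Ω : Type*} [MeasurableSpace Ω] (P : Measure Ω) [IsProbabilityMeasure P]
    (gradU : EuclideanSpace ℝ (Fin d) → EuclideanSpace ℝ (Fin d))
    (L α β τ₁ τ₂ : ℝ) (hL : 0 < L) (hα : 0 < α) (hβ : 0 < β)
    (hτ₁ : 0 < τ₁) (hτ₁₂ : τ₁ < τ₂)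
    (hsmooth : ∀ x y : EuclideanSpace ℝ (Fin d),
      ‖gradU x - gradU y‖ ≤ L * ‖x - y‖)
    (hdiss : ∀ x : EuclideanSpace ℝ (Fin d), α * ‖x‖ ^ 2 - β ≤ ⟪x, gradU x⟫)
    (xstar : EuclideanSpace ℝ (Fin d)) (hstar : gradU xstar = 0)
    (η : ℝ) (hη0 : 0 < η) (hη1 : η < α / L ^ 2)
    (Z Znext ξ : Ω → EuclideanSpace ℝ (Fin d)) (τk : Ω → ℝ)
    (hZmeas : Measurable Z) (hξmeas : Measurable ξ)
    -- τ(k) takes values in {τ₁, τ₂} and is σ(Z(k))-measurable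
    (hτval : ∀ ω, τk ω = τ₁ ∨ τk ω = τ₂)
    (hτZ : ∃ φ : EuclideanSpace ℝ (Fin d) → ℝ, Measurable φ ∧ τk = φ ∘ Z)
    -- the discrete Langevin update
    (hupdate : ∀ ω, Znext ω
      = Z ω - η • gradU (Z ω) + Real.sqrt (2 * η * τk ω) • ξ ω)
    -- ξ(k) is a standard Gaussian: i.i.d. standard normal coordinates
    (hgauss : ∀ i : Fin d,
      Measure.map (fun ω => ξ ω i) P = gaussianReal 0 1)
    (hcoordindep : iIndepFun
      (fun i ω => ξ ω i) P)
    -- ξ(k) is independent of (Z(k), τ(k))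
    (hindep : IndepFun ξ (fun ω => (Z ω, τk ω)) P)
    -- finite second moments
    (hZint : Integrable (fun ω => ‖Z ω‖ ^ 2) P)
    (hZnextint : Integrable (fun ω => ‖Znext ω‖ ^ 2) P) :
    (∫ ω, ‖Znext ω‖ ^ 2 ∂P)
      ≤ (1 - 2 * α * η + 2 * η ^ 2 * L ^ 2) * (∫ ω, ‖Z ω‖ ^ 2 ∂P)
        + 2 * (β + d * τ₂) * η + 2 * η ^ 2 * L ^ 2 * ‖xstar‖ ^ 2 :=
  discrete_iterate_second_moment_bound_general d P gradU L α β τ₁ τ₂ hτ₁ hτ₁₂ hsmooth hdiss xstar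
    hstar η hη0 Z Znext ξ τk hZmeas hτval hτZ hupdate hgauss hindep hZint
end

section
/- Let V(x₁,x₂) = exp( (α/4)·(‖x₁‖²/τ₁ + ‖x₂‖²/τ₂) ) and let L⁰ be the generator L⁰f = −⟨∇_{x₁}f, ∇U(x₁)⟩ + τ₁Δ_{x₁}f − ⟨∇_{x₂}f, ∇U(x₂)⟩ + τ₂Δ_{x₂}f. If U is (α,β)-dissipative, then there exist λ > 0, b ≥ 0, and r > 0 such that L⁰V(x₁,x₂) ≤ −λ·V(x₁,x₂) + b·1_{B_r}(x₁,x₂) for all (x₁,x₂) ∈ ℝᵈ × ℝᵈ, where B_r is the centered ball of radius r in ℝ²ᵈ. -/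
/-!
In each block `V` is `f y = exp (c ‖y‖² + k)`, with `∇f y = 2c f(y) y` and
`Δf y = f(y) (2cd + 4c²‖y‖²)`. For `c = α / (4τ)` dissipativity bounds the drift of a block by
`V · (αβ/(2τ) + αd/2 - α c ‖y‖²)`, since the gradient term contributes `-2αc ‖y‖²` and the Laplacian
only `+αc ‖y‖²`. Summing the blocks, `L⁰V ≤ -V + e^s (K - α s)` with `s = log V` and a constant `K`.
Outside a large ball `α s ≥ K`, and everywhere `e^s (K - α s) ≤ e^{K/α} K`.
-/

open scoped RealInnerProductSpace

/-- Laplacian of a real-valued function on Euclidean space,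
as the sum of second partial derivatives along the standard basis. -/
noncomputable def eLaplacian {n : ℕ} (f : EuclideanSpace ℝ (Fin n) → ℝ)
    (x : EuclideanSpace ℝ (Fin n)) : ℝ :=
  ∑ i : Fin n, fderiv ℝ (fun y => fderiv ℝ f y (EuclideanSpace.single i 1)) x
    (EuclideanSpace.single i 1)

open Real

section GaussianExp

variable {F : Type*} [NormedAddCommGroup F] [InnerProductSpace ℝ F] (c k : ℝ) (x : F)

theorem hasFDerivAt_exp_mul_norm_sq_add :
    HasFDerivAt (fun y : F => exp (c * ‖y‖ ^ 2 + k))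
      ((exp (c * ‖x‖ ^ 2 + k) * (2 * c)) • innerSL ℝ x) x := by
  have h := (((hasStrictFDerivAt_norm_sq x).hasFDerivAt.const_mul c).add_const k).exp
  refine h.congr_fderiv ?_
  ext v
  simp
  ring

theorem fderiv_exp_mul_norm_sq_add_apply (v : F) :
    fderiv ℝ (fun y : F => exp (c * ‖y‖ ^ 2 + k)) x v
      = exp (c * ‖x‖ ^ 2 + k) * (2 * c) * ⟪x, v⟫ := by
  simp [(hasFDerivAt_exp_mul_norm_sq_add c k x).fderiv, mul_assoc]

theorem fderiv_fderiv_exp_mul_norm_sq_add_apply (v : F) :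
    fderiv ℝ (fun y : F => fderiv ℝ (fun z : F => exp (c * ‖z‖ ^ 2 + k)) y v) x v
      = exp (c * ‖x‖ ^ 2 + k) * (2 * c * ‖v‖ ^ 2 + 4 * c ^ 2 * ⟪x, v⟫ ^ 2) := by
  simp_rw [fderiv_exp_mul_norm_sq_add_apply]
  have hinner : HasFDerivAt (fun y : F => ⟪y, v⟫) ((innerSL ℝ : F →L[ℝ] F →L[ℝ] ℝ).flip v) x :=
    ((innerSL ℝ : F →L[ℝ] F →L[ℝ] ℝ).flip v).hasFDerivAt
  rw [(((hasFDerivAt_exp_mul_norm_sq_add c k x).mul_const (2 * c)).fun_mul hinner).fderiv]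
  simp
  rw [innerSL_apply_apply, real_inner_self_eq_norm_sq]
  ring

theorem gradient_exp_mul_norm_sq_add [CompleteSpace F] :
    gradient (fun y : F => exp (c * ‖y‖ ^ 2 + k)) x = (exp (c * ‖x‖ ^ 2 + k) * (2 * c)) • x := by
  refine HasGradientAt.gradient ?_
  rw [hasGradientAt_iff_hasFDerivAt]
  refine (hasFDerivAt_exp_mul_norm_sq_add c k x).congr_fderiv ?_
  ext v
  simp [InnerProductSpace.toDual_apply_apply]

end GaussianExp

theorem eLaplacian_exp_mul_norm_sq_add {d : ℕ} (c k : ℝ) (x : EuclideanSpace ℝ (Fin d)) :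
    eLaplacian (fun y => exp (c * ‖y‖ ^ 2 + k)) x
      = exp (c * ‖x‖ ^ 2 + k) * (2 * c * d + 4 * c ^ 2 * ‖x‖ ^ 2) := by
  rw [eLaplacian]
  simp only [fderiv_fderiv_exp_mul_norm_sq_add_apply]
  simp [EuclideanSpace.real_norm_sq_eq, EuclideanSpace.inner_single_right, ← Finset.mul_sum,
    Finset.sum_add_distrib]
  ring

theorem neg_inner_gradient_add_mul_eLaplacian_le {d : ℕ} {α β τ : ℝ} (hα : 0 < α) (hτ : 0 < τ)
    (k : ℝ) {x g : EuclideanSpace ℝ (Fin d)} (hdiss : α * ‖x‖ ^ 2 - β ≤ ⟪x, g⟫) :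
    -⟪gradient (fun y => exp (α / (4 * τ) * ‖y‖ ^ 2 + k)) x, g⟫
        + τ * eLaplacian (fun y => exp (α / (4 * τ) * ‖y‖ ^ 2 + k)) x
      ≤ exp (α / (4 * τ) * ‖x‖ ^ 2 + k)
          * (α * β / (2 * τ) + α * d / 2 - α * (α / (4 * τ) * ‖x‖ ^ 2)) := by
  rw [gradient_exp_mul_norm_sq_add, eLaplacian_exp_mul_norm_sq_add, real_inner_smul_left]
  calc _ = exp (α / (4 * τ) * ‖x‖ ^ 2 + k)
          * (α * β / (2 * τ) + α * d / 2 - α * (α / (4 * τ) * ‖x‖ ^ 2)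
            - α / (2 * τ) * (⟪x, g⟫ - (α * ‖x‖ ^ 2 - β))) := by
        field_simp
        ring
    _ ≤ _ := mul_le_mul_of_nonneg_left
        (sub_le_self _ (mul_nonneg (by positivity) (sub_nonneg.2 hdiss))) (exp_pos _).le

theorem exp_mul_sub_le {α K s : ℝ} (hα : 0 < α) (hK : 0 ≤ K) (hs : 0 ≤ s) :
    exp s * (K - α * s) ≤ exp (K / α) * K := by
  rcases le_or_gt K (α * s) with hle | hlt
  · nlinarith [exp_pos s, exp_pos (K / α)]
  · have hsK : s ≤ K / α := by rw [le_div_iff₀ hα]; linarith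
    gcongr
    nlinarith

theorem lyapunov_drift_condition_general (d : ℕ)
    (U : EuclideanSpace ℝ (Fin d) → ℝ)
    (α β τ₁ τ₂ : ℝ) (hα : 0 < α) (hβ : 0 < β) (hτ₁ : 0 < τ₁) (hτ₂ : 0 < τ₂)
    (hdiss : ∀ x : EuclideanSpace ℝ (Fin d),
      α * ‖x‖ ^ 2 - β ≤ ⟪x, gradient U x⟫)
    (V : EuclideanSpace ℝ (Fin d) × EuclideanSpace ℝ (Fin d) → ℝ)
    (hV : ∀ p, V p = Real.exp ((α / 4) * (‖p.1‖ ^ 2 / τ₁ + ‖p.2‖ ^ 2 / τ₂)))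
    (L0V : EuclideanSpace ℝ (Fin d) × EuclideanSpace ℝ (Fin d) → ℝ)
    (hL0V : ∀ p : EuclideanSpace ℝ (Fin d) × EuclideanSpace ℝ (Fin d),
      L0V p = -⟪gradient (fun y => V (y, p.2)) p.1, gradient U p.1⟫
        + τ₁ * eLaplacian (fun y => V (y, p.2)) p.1
        - ⟪gradient (fun y => V (p.1, y)) p.2, gradient U p.2⟫
        + τ₂ * eLaplacian (fun y => V (p.1, y)) p.2) :
    ∃ lam > (0:ℝ), ∃ b ≥ (0:ℝ), ∃ r > (0:ℝ),
      ∀ p : EuclideanSpace ℝ (Fin d) × EuclideanSpace ℝ (Fin d),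
        L0V p ≤ -lam * V p
          + Set.indicator {q : EuclideanSpace ℝ (Fin d) × EuclideanSpace ℝ (Fin d) |
              ‖q.1‖ ^ 2 + ‖q.2‖ ^ 2 ≤ r ^ 2} (fun _ => b) p := by
  set K := α * β / (2 * τ₁) + α * β / (2 * τ₂) + α * d + 1
  have hK : 0 < K := by positivity
  set c := α / (4 * (τ₁ + τ₂))
  refine ⟨1, one_pos, exp (K / α) * K, by positivity, √(K / (α * c)), by positivity, fun p => ?_⟩
  set s := α / (4 * τ₁) * ‖p.1‖ ^ 2 + α / (4 * τ₂) * ‖p.2‖ ^ 2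
  have hVp : V p = exp s := by rw [hV]; simp only [s]; ring_nf
  have hV₁ : (fun y => V (y, p.2))
      = fun y => exp (α / (4 * τ₁) * ‖y‖ ^ 2 + α / (4 * τ₂) * ‖p.2‖ ^ 2) := by
    funext y; rw [hV]; ring_nf
  have hV₂ : (fun y => V (p.1, y))
      = fun y => exp (α / (4 * τ₂) * ‖y‖ ^ 2 + α / (4 * τ₁) * ‖p.1‖ ^ 2) := by
    funext y; rw [hV]; ring_nf
  have hdrift : L0V p ≤ -V p + exp s * (K - α * s) := by
    have h₁ := neg_inner_gradient_add_mul_eLaplacian_le hα hτ₁ (α / (4 * τ₂) * ‖p.2‖ ^ 2)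
      (hdiss p.1)
    have h₂ := neg_inner_gradient_add_mul_eLaplacian_le hα hτ₂ (α / (4 * τ₁) * ‖p.1‖ ^ 2)
      (hdiss p.2)
    rw [add_comm (α / (4 * τ₂) * ‖p.2‖ ^ 2)] at h₂
    rw [hL0V, hV₁, hV₂, hVp]
    linear_combination h₁ + h₂
  have hs : c * (‖p.1‖ ^ 2 + ‖p.2‖ ^ 2) ≤ s := by
    simp only [c, s, mul_add]
    gcongr <;> linarith
  by_cases hp : ‖p.1‖ ^ 2 + ‖p.2‖ ^ 2 ≤ √(K / (α * c)) ^ 2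
  · rw [Set.indicator_of_mem (by exact hp)]
    linarith [exp_mul_sub_le hα hK.le (hs.trans' (by positivity))]
  · rw [Set.indicator_of_notMem (by exact hp)]
    rw [sq_sqrt (by positivity), not_le, div_lt_iff₀ (by positivity)] at hp
    have hKs : K ≤ α * s := by nlinarith
    linarith [mul_nonpos_of_nonneg_of_nonpos (exp_pos s).le (sub_nonpos.2 hKs)]

theorem lyapunov_drift_condition (d : ℕ)
    (U : EuclideanSpace ℝ (Fin d) → ℝ) (hU : ContDiff ℝ 2 U)
    (α β τ₁ τ₂ : ℝ) (hα : 0 < α) (hβ : 0 < β) (hτ₁ : 0 < τ₁) (hτ₂ : 0 < τ₂)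
    (hdiss : ∀ x : EuclideanSpace ℝ (Fin d),
      α * ‖x‖ ^ 2 - β ≤ ⟪x, gradient U x⟫)
    (V : EuclideanSpace ℝ (Fin d) × EuclideanSpace ℝ (Fin d) → ℝ)
    (hV : ∀ p, V p = Real.exp ((α / 4) * (‖p.1‖ ^ 2 / τ₁ + ‖p.2‖ ^ 2 / τ₂)))
    (L0V : EuclideanSpace ℝ (Fin d) × EuclideanSpace ℝ (Fin d) → ℝ)
    (hL0V : ∀ p : EuclideanSpace ℝ (Fin d) × EuclideanSpace ℝ (Fin d),
      L0V p = -⟪gradient (fun y => V (y, p.2)) p.1, gradient U p.1⟫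
        + τ₁ * eLaplacian (fun y => V (y, p.2)) p.1
        - ⟪gradient (fun y => V (p.1, y)) p.2, gradient U p.2⟫
        + τ₂ * eLaplacian (fun y => V (p.1, y)) p.2) :
    ∃ lam > (0:ℝ), ∃ b ≥ (0:ℝ), ∃ r > (0:ℝ),
      ∀ p : EuclideanSpace ℝ (Fin d) × EuclideanSpace ℝ (Fin d),
        L0V p ≤ -lam * V p
          + Set.indicator {q : EuclideanSpace ℝ (Fin d) × EuclideanSpace ℝ (Fin d) |
              ‖q.1‖ ^ 2 + ‖q.2‖ ^ 2 ≤ r ^ 2} (fun _ => b) p :=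
  lyapunov_drift_condition_general d U α β τ₁ τ₂ hα hβ hτ₁ hτ₂ hdiss V hV L0V hL0V
end
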